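/- Fix t ∈ (0,1). The function k₂(α, p) = p t^α ln(t)/(1 − p(1 − t^α)), defined for α ∈ (0,∞) and p ∈ (0,1), is increasing in α for each fixed p ∈ (0,1). -/
import Mathlib


/-- Lemma 2.7 (i) of Das–Kayal: for fixed `t ∈ (0,1)` and each fixed `p ∈ (0,1)`, the
function `α ↦ k₂(α,p) = p t^α ln t / (1 - p(1 - t^α))` is increasing in `α` on `(0,∞)`. -/
theorem k2_increasing_in_alpha (t : ℝ) (ht : t ∈ Set.Ioo (0:ℝ) 1) :
    ∀ p ∈ Set.Ioo (0:ℝ) 1, ∀ a₁ ∈ Set.Ioi (0:ℝ), ∀ a₂ ∈ Set.Ioi (0:ℝ), a₁ ≤ a₂ →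
      p * t ^ a₁ * Real.log t / (1 - p * (1 - t ^ a₁)) ≤
        p * t ^ a₂ * Real.log t / (1 - p * (1 - t ^ a₂)) := by
  obtain ⟨ht0, ht1⟩ := ht
  intro p hp a₁ ha₁ a₂ ha₂ h12
  obtain ⟨hp0, hp1⟩ := hp
  have hu2le : t ^ a₂ ≤ t ^ a₁ := Real.rpow_le_rpow_of_exponent_ge ht0 ht1.le h12
  have hu1lt : t ^ a₁ < 1 := Real.rpow_lt_one ht0.le ht1 ha₁
  have hu1 : (0:ℝ) < t ^ a₁ := Real.rpow_pos_of_pos ht0 _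
  have hu2 : (0:ℝ) < t ^ a₂ := Real.rpow_pos_of_pos ht0 _
  have hL : Real.log t < 0 := Real.log_neg ht0 ht1
  have hd1 : (0:ℝ) < 1 - p * (1 - t ^ a₁) := by nlinarith
  have hd2 : (0:ℝ) < 1 - p * (1 - t ^ a₂) := by nlinarith
  rw [div_le_div_iff₀ hd1 hd2]
  nlinarith [mul_nonneg (mul_nonneg hp0.le (sub_nonneg.2 hu2le)) (neg_nonneg.2 hL.le),
    mul_nonneg (sub_nonneg.2 hp1.le) (sub_nonneg.2 hu2le)]
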